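/- Let n ≥ 1, N, N* ≥ 0 be integers, 0 = p₀ < p₁ < ⋯ < p_{N*} integers, and g, ρ₁, ρ₂, h₁, h₂ > 0 real constants, and assume a flat bottom b ≡ 0. Suppose ζ, φ_{1,0}, …, φ_{1,N}, φ_{2,0}, …, φ_{2,N*} : ℝⁿ × ℝ → ℝ are smooth functions satisfying the Kakinuma model (with H₁ = h₁ − ζ, H₂ = h₂ + ζ, and b ≡ 0). Set φ = ρ₂ Σ_{j=0}^{N*} H₂^{p_j} φ_{2,j} − ρ₁ Σ_{j=0}^{N} H₁^{2j} φ_{1,j}. Then the local conservation of momentum ∂_t m^K + ∇·F_m^K = 0 holds identically, where m^K = ζ ∇φ, and F_m^K = −( ζ ∂_tφ + e^K ) Id + ρ₁ Σ_{i,j=0}^{N} (1/(2(i+j)+1)) H₁^{2(i+j)+1} ∇φ_{1,i} ⊗ ∇φ_{1,j} + ρ₂ Σ_{i,j=0}^{N*} (1/(p_i+p_j+1)) H₂^{p_i+p_j+1} ∇φ_{2,i} ⊗ ∇φ_{2,j}, with e^K = (ρ₁/2) Σ_{i,j=0}^{N} ( (1/(2(i+j)+1)) H₁^{2(i+j)+1}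 ∇φ_{1,i}·∇φ_{1,j} + (4ij/(2(i+j)−1)) H₁^{2(i+j)−1} φ_{1,i}φ_{1,j} ) + (ρ₂/2) Σ_{i,j=0}^{N*} ( (1/(p_i+p_j+1)) H₂^{p_i+p_j+1} ∇φ_{2,i}·∇φ_{2,j} + (p_ip_j/(p_i+p_j−1)) H₂^{p_i+p_j−1} φ_{2,i}φ_{2,j} ) + (1/2)(ρ₂−ρ₁) g ζ². -/

import Mathlib

open scoped RealInnerProductSpace

/-- Time derivative `∂ₜ f` of a function of `(x, t)`. -/
noncomputable def pt {n : ℕ} (f : EuclideanSpace ℝ (Fin n) × ℝ → ℝ)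
    (q : EuclideanSpace ℝ (Fin n) × ℝ) : ℝ :=
  deriv (fun s => f (q.1, s)) q.2

/-- Spatial gradient `∇f` of a function of `(x, t)`. -/
noncomputable def gradx {n : ℕ} (f : EuclideanSpace ℝ (Fin n) × ℝ → ℝ)
    (q : EuclideanSpace ℝ (Fin n) × ℝ) : EuclideanSpace ℝ (Fin n) :=
  gradient (fun y => f (y, q.2)) q.1

/-- Spatial divergence `∇·F` of a vector field of `(x, t)`. -/
noncomputable def divx {n : ℕ}
    (F : EuclideanSpace ℝ (Fin n) × ℝ → EuclideanSpace ℝ (Fin n))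
    (q : EuclideanSpace ℝ (Fin n) × ℝ) : ℝ :=
  ∑ l : Fin n, fderiv ℝ (fun y => F (y, q.2)) q.1 (EuclideanSpace.single l (1 : ℝ)) l

/-- Row-wise spatial divergence of a matrix-valued field: `(∇·F)_l = ∑ₖ ∂ₖ F_{k l}`. -/
noncomputable def divxMat {n : ℕ}
    (F : EuclideanSpace ℝ (Fin n) × ℝ → Matrix (Fin n) (Fin n) ℝ)
    (q : EuclideanSpace ℝ (Fin n) × ℝ) (l : Fin n) : ℝ :=
  ∑ k : Fin n, fderiv ℝ (fun y => F (y, q.2) k l) q.1 (EuclideanSpace.single k (1 : ℝ))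

@[fun_prop]
theorem myContDiff.sum {ι E : Type*} [NormedAddCommGroup E] [NormedSpace ℝ E]
    {m : WithTop ℕ∞} (s : Finset ι) (f : ι → E → ℝ)
    (h : ∀ i ∈ s, ContDiff ℝ m (f i)) : ContDiff ℝ m (fun x => ∑ i ∈ s, f i x) :=
  ContDiff.sum h

abbrev Q (n : ℕ) := EuclideanSpace ℝ (Fin n) × ℝ

noncomputable def ee {n : ℕ} (k : Fin n) : Q n := (EuclideanSpace.single k 1, 0)
noncomputable def et {n : ℕ} : Q n := (0, 1)

noncomputable def Dv {n : ℕ} (f : Q n → ℝ) (v : Q n) (q : Q n) : ℝ := fderiv ℝ f q v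

section slice
variable {n : ℕ} {f : Q n → ℝ} {q : Q n}

theorem fderiv_slice (hf : DifferentiableAt ℝ f q) (v : EuclideanSpace ℝ (Fin n)) :
    fderiv ℝ (fun y => f (y, q.2)) q.1 v = fderiv ℝ f q (v, 0) := by
  have hι : HasFDerivAt (fun y : EuclideanSpace ℝ (Fin n) => (y, q.2))
      ((ContinuousLinearMap.id ℝ _).prod 0) q.1 :=
    (hasFDerivAt_id q.1).prodMk (hasFDerivAt_const q.2 q.1)
  have := (hf.hasFDerivAt.comp q.1 hι).fderiv
  rw [show f = fun p : Q n => f p from rfl] at this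
  calc fderiv ℝ (fun y => f (y, q.2)) q.1 v
      = ((fderiv ℝ f q).comp ((ContinuousLinearMap.id ℝ _).prod 0)) v := by
        rw [← this]; rfl
    _ = fderiv ℝ f q (v, 0) := rfl

theorem pt_eq (hf : DifferentiableAt ℝ f q) : pt f q = Dv f et q := by
  have hc : HasDerivAt (fun s : ℝ => (q.1, s)) ((0 : EuclideanSpace ℝ (Fin n)), (1:ℝ)) q.2 :=
    (hasDerivAt_const q.2 q.1).prodMk (hasDerivAt_id q.2)
  have := (hf.hasFDerivAt.comp_hasDerivAt q.2 hc).deriv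
  simpa [pt, Dv, et, Function.comp_def] using this

theorem gradx_eq (hf : DifferentiableAt ℝ f q) (k : Fin n) :
    gradx f q k = Dv f (ee k) q := by
  have hd : DifferentiableAt ℝ (fun y => f (y, q.2)) q.1 := by
    have hι : DifferentiableAt ℝ (fun y : EuclideanSpace ℝ (Fin n) => (y, q.2)) q.1 :=
      (differentiableAt_id).prodMk (differentiableAt_const _)
    exact hf.comp q.1 hι
  have h1 : ⟪gradx f q, EuclideanSpace.single k (1:ℝ)⟫ =
      fderiv ℝ (fun y => f (y, q.2)) q.1 (EuclideanSpace.single k (1:ℝ)) := by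
    have h2 := hd.hasGradientAt.hasFDerivAt.fderiv
    rw [h2]
    rw [show gradx f q = gradient (fun y => f (y, q.2)) q.1 from rfl]
    exact InnerProductSpace.toDual_apply_apply.symm
  have h3 : (ee k : Q n) = (EuclideanSpace.single k (1:ℝ), 0) := rfl
  rw [Dv, h3, ← fderiv_slice hf, ← h1]
  simp [real_inner_comm, EuclideanSpace.inner_single_right]
end slice

section slice2
variable {n : ℕ} {G : Type*} [NormedAddCommGroup G] [NormedSpace ℝ G]

theorem fderiv_sliceG {f : Q n → G} {q : Q n} (hf : DifferentiableAt ℝ f q)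
    (v : EuclideanSpace ℝ (Fin n)) :
    fderiv ℝ (fun y => f (y, q.2)) q.1 v = fderiv ℝ f q (v, 0) := by
  have hι : HasFDerivAt (fun y : EuclideanSpace ℝ (Fin n) => (y, q.2))
      ((ContinuousLinearMap.id ℝ _).prod 0) q.1 :=
    (hasFDerivAt_id q.1).prodMk (hasFDerivAt_const q.2 q.1)
  have h := (hf.hasFDerivAt.comp q.1 hι).fderiv
  calc fderiv ℝ (fun y => f (y, q.2)) q.1 v
      = ((fderiv ℝ f q).comp ((ContinuousLinearMap.id ℝ _).prod 0)) v := by rw [← h]; rfl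
    _ = fderiv ℝ f q (v, 0) := rfl

theorem divx_eq {F : Q n → EuclideanSpace ℝ (Fin n)} {q : Q n}
    (hF : DifferentiableAt ℝ F q) :
    divx F q = ∑ k : Fin n, Dv (fun q' => F q' k) (ee k) q := by
  rw [divx]
  refine Finset.sum_congr rfl fun k _ => ?_
  have hslice : DifferentiableAt ℝ (fun y => F (y, q.2)) q.1 :=
    hF.comp q.1 ((differentiableAt_id).prodMk (differentiableAt_const _))
  have hp : fderiv ℝ (fun y => F (y, q.2)) q.1 (EuclideanSpace.single k 1) k
      = fderiv ℝ (fun y => F (y, q.2) k) q.1 (EuclideanSpace.single k 1) := by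
    have := ((EuclideanSpace.proj (𝕜 := ℝ) k).hasFDerivAt.comp q.1
      hslice.hasFDerivAt).fderiv
    calc fderiv ℝ (fun y => F (y, q.2)) q.1 (EuclideanSpace.single k 1) k
        = ((EuclideanSpace.proj (𝕜 := ℝ) k).comp
            (fderiv ℝ (fun y => F (y, q.2)) q.1)) (EuclideanSpace.single k 1) := rfl
      _ = _ := by rw [← this]; rfl
  have hk : DifferentiableAt ℝ (fun q' => F q' k) q := by
    exact ((EuclideanSpace.proj (𝕜 := ℝ) k).differentiableAt).comp q hF
  rw [hp, fderiv_sliceG hk]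
  rfl

theorem divxMat_eq {F : Q n → Matrix (Fin n) (Fin n) ℝ} {q : Q n} {l : Fin n}
    (hF : ∀ k l : Fin n, DifferentiableAt ℝ (fun q' => F q' k l) q) :
    divxMat F q l = ∑ k : Fin n, Dv (fun q' => F q' k l) (ee k) q := by
  rw [divxMat]
  exact Finset.sum_congr rfl fun k _ => by
    rw [fderiv_sliceG (hF k l)]; rfl
end slice2

section alg
variable {n : ℕ} {f g : Q n → ℝ} {v q : Q n}

theorem Dv_const (c : ℝ) : Dv (fun _ : Q n => c) v q = 0 := by
  simp [Dv]

theorem Dv_add (hf : DifferentiableAt ℝ f q) (hg : DifferentiableAt ℝ g q) :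
    Dv (fun q' => f q' + g q') v q = Dv f v q + Dv g v q := by
  simp [Dv, fderiv_fun_add hf hg]

theorem Dv_sub (hf : DifferentiableAt ℝ f q) (hg : DifferentiableAt ℝ g q) :
    Dv (fun q' => f q' - g q') v q = Dv f v q - Dv g v q := by
  simp [Dv, fderiv_fun_sub hf hg]

theorem Dv_neg : Dv (fun q' => -f q') v q = -Dv f v q := by
  simp [Dv, fderiv_neg]

theorem Dv_mul (hf : DifferentiableAt ℝ f q) (hg : DifferentiableAt ℝ g q) :
    Dv (fun q' => f q' * g q') v q = Dv f v q * g q + f q * Dv g v q := by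
  rw [Dv, fderiv_fun_mul hf hg]; simp [Dv]; ring

theorem Dv_const_mul (c : ℝ) (hf : DifferentiableAt ℝ f q) :
    Dv (fun q' => c * f q') v q = c * Dv f v q := by
  simp [Dv, fderiv_const_mul hf]

theorem Dv_const_add (c : ℝ) :
    Dv (fun q' => c + f q') v q = Dv f v q := by
  simp [Dv, fderiv_const_add]

theorem Dv_const_sub (c : ℝ) :
    Dv (fun q' => c - f q') v q = -Dv f v q := by
  simp [Dv, fderiv_const_sub]

theorem Dv_pow (m : ℕ) (hf : DifferentiableAt ℝ f q) :
    Dv (fun q' => f q' ^ m) v q = (m : ℝ) * f q ^ (m - 1) * Dv f v q := by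
  induction m with
  | zero => simpa using Dv_const (n := n) (v := v) (q := q) 1
  | succ m ih =>
    have h1 : Dv (fun q' => f q' ^ m * f q') v q
        = Dv (fun q' => f q' ^ m) v q * f q + f q ^ m * Dv f v q :=
      Dv_mul (hf.pow m) hf
    have h2 : (fun q' => f q' ^ (m + 1)) = fun q' => f q' ^ m * f q' := by
      funext q'; rw [pow_succ]
    rw [h2, h1, ih]
    rcases Nat.eq_zero_or_pos m with hm | hm
    · subst hm; simp
    · have : f q ^ (m - 1) * f q = f q ^ m := by
        rw [← pow_succ]; congr 1; omega
      have hmm : (m + 1 : ℕ) - 1 = m := by omega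
      rw [hmm]; push_cast
      calc (m:ℝ) * f q ^ (m-1) * Dv f v q * f q + f q ^ m * Dv f v q
          = (m:ℝ) * (f q ^ (m-1) * f q) * Dv f v q + f q ^ m * Dv f v q := by ring
        _ = ((m:ℝ) + 1) * f q ^ m * Dv f v q := by rw [this]; ring

theorem Dv_sum {ι : Type*} (s : Finset ι) (F : ι → Q n → ℝ)
    (hF : ∀ i ∈ s, DifferentiableAt ℝ (F i) q) :
    Dv (fun q' => ∑ i ∈ s, F i q') v q = ∑ i ∈ s, Dv (F i) v q := by
  simp [Dv, fderiv_fun_sum hF]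

end alg

section smooth
variable {n : ℕ} {f : Q n → ℝ} {v : Q n}

theorem ContDiff.dv (hf : ContDiff ℝ (⊤ : ℕ∞) f) : ContDiff ℝ (⊤ : ℕ∞) (Dv f v) := by
  exact (hf.fderiv_right (le_refl _)).clm_apply contDiff_const

theorem Dv_swap (hf : ContDiff ℝ (⊤ : ℕ∞) f) (v w q : Q n) :
    Dv (Dv f v) w q = Dv (Dv f w) v q := by
  have hsymm : IsSymmSndFDerivAt ℝ f q := by
    apply (hf.contDiffAt).isSymmSndFDerivAt
    rw [minSmoothness_of_isRCLikeNormedField]; exact (WithTop.coe_le_coe.mpr le_top : ((2 : ℕ∞) : WithTop ℕ∞) ≤ ((⊤ : ℕ∞) : WithTop ℕ∞))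
  have hd : DifferentiableAt ℝ (fderiv ℝ f) q :=
    ((hf.fderiv_right (m := (⊤ : ℕ∞)) (by simp)).differentiable (by simp)).differentiableAt
  have key : ∀ u w' : Q n, Dv (Dv f u) w' q = fderiv ℝ (fderiv ℝ f) q w' u := by
    intro u w'
    have h := fderiv_clm_apply (c := fderiv ℝ f) (u := fun _ => u) hd
      (differentiableAt_const u)
    rw [Dv, show Dv f u = fun q' => fderiv ℝ f q' u from rfl, h]
    simp
  rw [key v w, key w v, hsymm.eq]
end smooth

theorem layer {n M : ℕ} (r : Fin (M+1) → ℕ)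
    (H : Q n → ℝ) (φ : Fin (M+1) → Q n → ℝ)
    (hH : ContDiff ℝ (⊤ : ℕ∞) H) (hφ : ∀ i, ContDiff ℝ (⊤ : ℕ∞) (φ i))
    (heq : ∀ (q : Q n) (i : Fin (M+1)),
      H q ^ r i * Dv H et q
        + ∑ j, (divx (fun q' =>
              ((1:ℝ)/((r i : ℝ)+(r j : ℝ)+1) * H q' ^ (r i + r j + 1)) • gradx (φ j) q') q
            - ((r i : ℝ)*(r j : ℝ))/((r i : ℝ)+(r j : ℝ)-1)
              * H q ^ (r i + r j - 1) * φ j q) = 0)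
    (q : Q n) (l : Fin n) :
    Dv H et q * (∑ i, H q ^ r i * Dv (φ i) (ee l) q)
    + Dv H (ee l) q * ((1:ℝ)/2) *
        ((∑ k, (∑ i, H q ^ r i * Dv (φ i) (ee k) q)^2)
          + (∑ i, (r i : ℝ) * H q ^ (r i - 1) * φ i q)^2)
    - (1:ℝ)/2 * Dv (fun q' => ∑ i, ∑ j,
        ((1:ℝ)/((r i : ℝ)+(r j : ℝ)+1) * H q' ^ (r i + r j + 1)
            * ∑ k, Dv (φ i) (ee k) q' * Dv (φ j) (ee k) q'
          + ((r i : ℝ)*(r j : ℝ))/((r i : ℝ)+(r j : ℝ)-1)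
            * H q' ^ (r i + r j - 1) * φ i q' * φ j q')) (ee l) q
    + ∑ i, ∑ j, ∑ k, Dv (fun q' =>
        (1:ℝ)/((r i : ℝ)+(r j : ℝ)+1) * H q' ^ (r i + r j + 1)
          * Dv (φ i) (ee k) q' * Dv (φ j) (ee l) q') (ee k) q = 0 := by
  have hHd : Differentiable ℝ H := hH.differentiable (by simp)
  have hφd : ∀ i, Differentiable ℝ (φ i) := fun i => (hφ i).differentiable (by simp)
  have hA : ∀ (i : Fin (M+1)) (v : Q n), Differentiable ℝ (Dv (φ i) v) :=
    fun i v => ((hφ i).dv).differentiable (by simp)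
  set ht := Dv H et q with hht
  set hl := Dv H (ee l) q with hhl
  set U := ∑ i, H q ^ r i * Dv (φ i) (ee l) q with hU
  set SC := ∑ i, ∑ j, (1:ℝ)/((r i : ℝ)+(r j : ℝ)+1) * H q ^ (r i + r j + 1)
      * ∑ k, Dv (φ i) (ee k) q * Dv (Dv (φ j) (ee l)) (ee k) q with hSC
  set SD := ∑ i, ∑ j, ((r i : ℝ)*(r j : ℝ))/((r i : ℝ)+(r j : ℝ)-1)
      * H q ^ (r i + r j - 1) * φ j q * Dv (φ i) (ee l) q with hSD
  set SP := ∑ i, ∑ j, H q ^ (r i + r j)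
      * ∑ k, Dv (φ i) (ee k) q * Dv (φ j) (ee k) q with hSP
  set SW := ∑ i, ∑ j, (r i : ℝ) * (r j : ℝ) * H q ^ (r i + r j - 2) * φ i q * φ j q with hSW
  have hC : (∑ k, (∑ i, H q ^ r i * Dv (φ i) (ee k) q)^2) = SP := by
    rw [hSP]
    have step1 : ∀ k : Fin n, (∑ i, H q ^ r i * Dv (φ i) (ee k) q)^2
        = ∑ i, ∑ j, (H q ^ r i * Dv (φ i) (ee k) q) * (H q ^ r j * Dv (φ j) (ee k) q) := by
      intro k; rw [sq, Finset.sum_mul_sum]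
    rw [Finset.sum_congr rfl (fun k _ => step1 k), Finset.sum_comm]
    refine Finset.sum_congr rfl fun i _ => ?_
    rw [Finset.sum_comm]
    refine Finset.sum_congr rfl fun j _ => ?_
    rw [Finset.mul_sum]
    refine Finset.sum_congr rfl fun k _ => ?_
    rw [pow_add]; ring
  have hC2 : (∑ i, (r i : ℝ) * H q ^ (r i - 1) * φ i q)^2 = SW := by
    rw [hSW, sq, Finset.sum_mul_sum]
    refine Finset.sum_congr rfl fun i _ => Finset.sum_congr rfl fun j _ => ?_
    rcases Nat.eq_zero_or_pos (r i) with hi | hi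
    · simp [hi]
    rcases Nat.eq_zero_or_pos (r j) with hj | hj
    · simp [hj]
    have : H q ^ (r i - 1) * H q ^ (r j - 1) = H q ^ (r i + r j - 2) := by
      rw [← pow_add]; congr 1; omega
    calc (r i : ℝ) * H q ^ (r i - 1) * φ i q * ((r j : ℝ) * H q ^ (r j - 1) * φ j q)
        = (r i : ℝ) * (r j : ℝ) * (H q ^ (r i - 1) * H q ^ (r j - 1)) * φ i q * φ j q := by ring
      _ = _ := by rw [this]
  have hB : Dv (fun q' => ∑ i, ∑ j,
        ((1:ℝ)/((r i : ℝ)+(r j : ℝ)+1) * H q' ^ (r i + r j + 1)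
            * ∑ k, Dv (φ i) (ee k) q' * Dv (φ j) (ee k) q'
          + ((r i : ℝ)*(r j : ℝ))/((r i : ℝ)+(r j : ℝ)-1)
            * H q' ^ (r i + r j - 1) * φ i q' * φ j q')) (ee l) q
      = hl * SP + 2 * SC + hl * SW + 2 * SD := by
    have hc1 : ∀ i j : Fin (M+1), (1:ℝ)/((r i : ℝ)+(r j : ℝ)+1) * ((r i + r j + 1 : ℕ) : ℝ) = 1 := by
      intro i j
      have hne : ((r i : ℝ)+(r j : ℝ)+1) ≠ 0 := by positivity
      push_cast
      field_simp
    have hcd : ∀ i j : Fin (M+1),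
        ((r i : ℝ)*(r j : ℝ))/((r i : ℝ)+(r j : ℝ)-1) * ((r i + r j - 1 : ℕ) : ℝ)
          = (r i : ℝ)*(r j : ℝ) := by
      intro i j
      by_cases hm : r i + r j = 0
      · have hri : r i = 0 := by omega
        simp [hri]
      by_cases hm1 : r i + r j = 1
      · have : r i = 0 ∨ r j = 0 := by omega
        rcases this with h0 | h0 <;> simp [h0]
      have hcast : ((r i + r j - 1 : ℕ) : ℝ) = (r i : ℝ) + (r j : ℝ) - 1 := by
        rw [Nat.cast_sub (by omega)]; push_cast; ring
      have hne : (r i : ℝ) + (r j : ℝ) - 1 ≠ 0 := by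
        have h2 : (2:ℕ) ≤ r i + r j := by omega
        have : (2:ℝ) ≤ (r i : ℝ) + (r j : ℝ) := by exact_mod_cast h2
        linarith
      rw [hcast, div_mul_cancel₀ _ hne]
    have hT1 : ∀ i j : Fin (M+1),
        Dv (fun q' => (1:ℝ)/((r i : ℝ)+(r j : ℝ)+1) * H q' ^ (r i + r j + 1)
            * ∑ k, Dv (φ i) (ee k) q' * Dv (φ j) (ee k) q') (ee l) q
          = H q ^ (r i + r j) * hl * (∑ k, Dv (φ i) (ee k) q * Dv (φ j) (ee k) q)
            + (1:ℝ)/((r i : ℝ)+(r j : ℝ)+1) * H q ^ (r i + r j + 1)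
              * ∑ k, (Dv (Dv (φ i) (ee k)) (ee l) q * Dv (φ j) (ee k) q
                  + Dv (φ i) (ee k) q * Dv (Dv (φ j) (ee k)) (ee l) q) := by
      intro i j
      have h1 : Dv (fun q' => (1:ℝ)/((r i : ℝ)+(r j : ℝ)+1) * H q' ^ (r i + r j + 1)
            * ∑ k, Dv (φ i) (ee k) q' * Dv (φ j) (ee k) q') (ee l) q
          = Dv (fun q' => (1:ℝ)/((r i : ℝ)+(r j : ℝ)+1) * H q' ^ (r i + r j + 1)) (ee l) q
              * (∑ k, Dv (φ i) (ee k) q * Dv (φ j) (ee k) q)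
            + ((1:ℝ)/((r i : ℝ)+(r j : ℝ)+1) * H q ^ (r i + r j + 1))
              * Dv (fun q' => ∑ k, Dv (φ i) (ee k) q' * Dv (φ j) (ee k) q') (ee l) q :=
        Dv_mul (by fun_prop) (by fun_prop)
      have h2 : Dv (fun q' => (1:ℝ)/((r i : ℝ)+(r j : ℝ)+1) * H q' ^ (r i + r j + 1)) (ee l) q
          = (1:ℝ)/((r i : ℝ)+(r j : ℝ)+1)
              * (((r i + r j + 1 : ℕ) : ℝ) * H q ^ (r i + r j + 1 - 1) * hl) := by
        rw [Dv_const_mul _ (by fun_prop), Dv_pow _ (hHd q), hhl]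
      have h4 : Dv (fun q' => ∑ k, Dv (φ i) (ee k) q' * Dv (φ j) (ee k) q') (ee l) q
          = ∑ k, (Dv (Dv (φ i) (ee k)) (ee l) q * Dv (φ j) (ee k) q
              + Dv (φ i) (ee k) q * Dv (Dv (φ j) (ee k)) (ee l) q) := by
        rw [Dv_sum Finset.univ (fun k q' => Dv (φ i) (ee k) q' * Dv (φ j) (ee k) q')
          (fun k _ => by fun_prop)]
        exact Finset.sum_congr rfl fun k _ => Dv_mul (hA i (ee k) q) (hA j (ee k) q)
      rw [h1, h2, h4, Nat.add_sub_cancel]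
      linear_combination (H q ^ (r i + r j) * hl
        * (∑ k, Dv (φ i) (ee k) q * Dv (φ j) (ee k) q)) * hc1 i j
    have hT2 : ∀ i j : Fin (M+1),
        Dv (fun q' => ((r i : ℝ)*(r j : ℝ))/((r i : ℝ)+(r j : ℝ)-1)
            * H q' ^ (r i + r j - 1) * φ i q' * φ j q') (ee l) q
          = (r i : ℝ)*(r j : ℝ) * H q ^ (r i + r j - 2) * φ i q * φ j q * hl
            + ((r i : ℝ)*(r j : ℝ))/((r i : ℝ)+(r j : ℝ)-1) * H q ^ (r i + r j - 1)
              * (Dv (φ i) (ee l) q * φ j q + φ i q * Dv (φ j) (ee l) q) := by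
      intro i j
      have h1 : Dv (fun q' => ((r i : ℝ)*(r j : ℝ))/((r i : ℝ)+(r j : ℝ)-1)
            * H q' ^ (r i + r j - 1) * φ i q' * φ j q') (ee l) q
          = Dv (fun q' => ((r i : ℝ)*(r j : ℝ))/((r i : ℝ)+(r j : ℝ)-1)
              * H q' ^ (r i + r j - 1) * φ i q') (ee l) q * φ j q
            + (((r i : ℝ)*(r j : ℝ))/((r i : ℝ)+(r j : ℝ)-1)
              * H q ^ (r i + r j - 1) * φ i q) * Dv (φ j) (ee l) q :=
        Dv_mul (by fun_prop) (hφd j q)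
      have h2 : Dv (fun q' => ((r i : ℝ)*(r j : ℝ))/((r i : ℝ)+(r j : ℝ)-1)
            * H q' ^ (r i + r j - 1) * φ i q') (ee l) q
          = Dv (fun q' => ((r i : ℝ)*(r j : ℝ))/((r i : ℝ)+(r j : ℝ)-1)
              * H q' ^ (r i + r j - 1)) (ee l) q * φ i q
            + (((r i : ℝ)*(r j : ℝ))/((r i : ℝ)+(r j : ℝ)-1)
              * H q ^ (r i + r j - 1)) * Dv (φ i) (ee l) q :=
        Dv_mul (by fun_prop) (hφd i q)
      have h3 : Dv (fun q' => ((r i : ℝ)*(r j : ℝ))/((r i : ℝ)+(r j : ℝ)-1)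
            * H q' ^ (r i + r j - 1)) (ee l) q
          = ((r i : ℝ)*(r j : ℝ))/((r i : ℝ)+(r j : ℝ)-1)
              * (((r i + r j - 1 : ℕ) : ℝ) * H q ^ (r i + r j - 1 - 1) * hl) := by
        rw [Dv_const_mul _ (by fun_prop), Dv_pow _ (hHd q), hhl]
      have hsub : r i + r j - 1 - 1 = r i + r j - 2 := by omega
      rw [h1, h2, h3, hsub]
      linear_combination (H q ^ (r i + r j - 2) * hl * φ i q * φ j q) * hcd i j
    have hswap : ∀ (i : Fin (M+1)) (k : Fin n),
        Dv (Dv (φ i) (ee k)) (ee l) q = Dv (Dv (φ i) (ee l)) (ee k) q :=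
      fun i k => Dv_swap (hφ i) (ee k) (ee l) q
    calc Dv (fun q' => ∑ i, ∑ j,
          ((1:ℝ)/((r i : ℝ)+(r j : ℝ)+1) * H q' ^ (r i + r j + 1)
              * ∑ k, Dv (φ i) (ee k) q' * Dv (φ j) (ee k) q'
            + ((r i : ℝ)*(r j : ℝ))/((r i : ℝ)+(r j : ℝ)-1)
              * H q' ^ (r i + r j - 1) * φ i q' * φ j q')) (ee l) q
        = ∑ i, ∑ j, Dv (fun q' =>
            ((1:ℝ)/((r i : ℝ)+(r j : ℝ)+1) * H q' ^ (r i + r j + 1)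
                * ∑ k, Dv (φ i) (ee k) q' * Dv (φ j) (ee k) q'
              + ((r i : ℝ)*(r j : ℝ))/((r i : ℝ)+(r j : ℝ)-1)
                * H q' ^ (r i + r j - 1) * φ i q' * φ j q')) (ee l) q := by
          rw [Dv_sum Finset.univ _ (fun i _ => by fun_prop)]
          exact Finset.sum_congr rfl fun i _ => by
            rw [Dv_sum Finset.univ _ (fun j _ => by fun_prop)]
      _ = ∑ i, ∑ j,
            ((H q ^ (r i + r j) * hl * (∑ k, Dv (φ i) (ee k) q * Dv (φ j) (ee k) q)
              + (1:ℝ)/((r i : ℝ)+(r j : ℝ)+1) * H q ^ (r i + r j + 1)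
                * ∑ k, (Dv (Dv (φ i) (ee k)) (ee l) q * Dv (φ j) (ee k) q
                    + Dv (φ i) (ee k) q * Dv (Dv (φ j) (ee k)) (ee l) q))
            + ((r i : ℝ)*(r j : ℝ) * H q ^ (r i + r j - 2) * φ i q * φ j q * hl
              + ((r i : ℝ)*(r j : ℝ))/((r i : ℝ)+(r j : ℝ)-1) * H q ^ (r i + r j - 1)
                * (Dv (φ i) (ee l) q * φ j q + φ i q * Dv (φ j) (ee l) q))) := by
          refine Finset.sum_congr rfl fun i _ => Finset.sum_congr rfl fun j _ => ?_
          rw [← hT1 i j, ← hT2 i j]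
          exact Dv_add (by fun_prop) (by fun_prop)
      _ = ∑ i, ∑ j,
            (H q ^ (r i + r j) * hl * (∑ k, Dv (φ i) (ee k) q * Dv (φ j) (ee k) q)
            + (1:ℝ)/((r i : ℝ)+(r j : ℝ)+1) * H q ^ (r i + r j + 1)
                * ∑ k, Dv (Dv (φ i) (ee k)) (ee l) q * Dv (φ j) (ee k) q
            + (1:ℝ)/((r i : ℝ)+(r j : ℝ)+1) * H q ^ (r i + r j + 1)
                * ∑ k, Dv (φ i) (ee k) q * Dv (Dv (φ j) (ee k)) (ee l) q
            + (r i : ℝ)*(r j : ℝ) * H q ^ (r i + r j - 2) * φ i q * φ j q * hl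
            + ((r i : ℝ)*(r j : ℝ))/((r i : ℝ)+(r j : ℝ)-1) * H q ^ (r i + r j - 1)
                * φ j q * Dv (φ i) (ee l) q
            + ((r i : ℝ)*(r j : ℝ))/((r i : ℝ)+(r j : ℝ)-1) * H q ^ (r i + r j - 1)
                * φ i q * Dv (φ j) (ee l) q) := by
          refine Finset.sum_congr rfl fun i _ => Finset.sum_congr rfl fun j _ => ?_
          rw [Finset.sum_add_distrib]
          ring
      _ = hl * SP + 2 * SC + hl * SW + 2 * SD := by
          have e1 : (∑ i, ∑ j, H q ^ (r i + r j) * hl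
                * (∑ k, Dv (φ i) (ee k) q * Dv (φ j) (ee k) q)) = hl * SP := by
            rw [hSP, Finset.mul_sum]
            refine Finset.sum_congr rfl fun i _ => ?_
            rw [Finset.mul_sum]
            exact Finset.sum_congr rfl fun j _ => by ring
          have e2b : (∑ i, ∑ j, (1:ℝ)/((r i : ℝ)+(r j : ℝ)+1) * H q ^ (r i + r j + 1)
                * ∑ k, Dv (φ i) (ee k) q * Dv (Dv (φ j) (ee k)) (ee l) q) = SC := by
            rw [hSC]
            refine Finset.sum_congr rfl fun i _ => Finset.sum_congr rfl fun j _ => ?_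
            congr 1
            exact Finset.sum_congr rfl fun k _ => by rw [hswap j k]
          have e2a : (∑ i, ∑ j, (1:ℝ)/((r i : ℝ)+(r j : ℝ)+1) * H q ^ (r i + r j + 1)
                * ∑ k, Dv (Dv (φ i) (ee k)) (ee l) q * Dv (φ j) (ee k) q) = SC := by
            rw [hSC, Finset.sum_comm]
            refine Finset.sum_congr rfl fun j _ => Finset.sum_congr rfl fun i _ => ?_
            rw [Nat.add_comm (r i) (r j),
              Finset.sum_congr rfl (fun k _ => by rw [hswap i k]; exact mul_comm _ _ :
                ∀ k ∈ Finset.univ, Dv (Dv (φ i) (ee k)) (ee l) q * Dv (φ j) (ee k) q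
                  = Dv (φ j) (ee k) q * Dv (Dv (φ i) (ee l)) (ee k) q)]
            ring
          have e3 : (∑ i, ∑ j, (r i : ℝ)*(r j : ℝ) * H q ^ (r i + r j - 2)
                * φ i q * φ j q * hl) = hl * SW := by
            rw [hSW, Finset.mul_sum]
            refine Finset.sum_congr rfl fun i _ => ?_
            rw [Finset.mul_sum]
            exact Finset.sum_congr rfl fun j _ => by ring
          have e4a : (∑ i, ∑ j, ((r i : ℝ)*(r j : ℝ))/((r i : ℝ)+(r j : ℝ)-1)
                * H q ^ (r i + r j - 1) * φ j q * Dv (φ i) (ee l) q) = SD := by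
            rw [hSD]
          have e4b : (∑ i, ∑ j, ((r i : ℝ)*(r j : ℝ))/((r i : ℝ)+(r j : ℝ)-1)
                * H q ^ (r i + r j - 1) * φ i q * Dv (φ j) (ee l) q) = SD := by
            rw [hSD, Finset.sum_comm]
            refine Finset.sum_congr rfl fun j _ => Finset.sum_congr rfl fun i _ => ?_
            rw [Nat.add_comm (r i) (r j)]
            ring
          simp only [Finset.sum_add_distrib]
          rw [e1, e2a, e2b, e3, e4a, e4b]; ring
  have hgradx : ∀ (i : Fin (M+1)) (m' : ℕ) (c' : ℝ),
      (fun q' => (c' * H q' ^ m') • gradx (φ i) q')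
        = fun q' => ∑ k : Fin n, (c' * H q' ^ m' * Dv (φ i) (ee k) q') • EuclideanSpace.single k (1:ℝ) := by
    intro i m' c'
    funext q'
    have hg : gradx (φ i) q' = ∑ k : Fin n, Dv (φ i) (ee k) q' • EuclideanSpace.single k (1:ℝ) := by
      ext k
      rw [gradx_eq (hφd i q'), WithLp.ofLp_sum, Finset.sum_apply]
      simp [EuclideanSpace.single_apply]
    rw [hg, Finset.smul_sum]
    refine Finset.sum_congr rfl fun k _ => ?_
    rw [smul_smul]
  have hFdiff : ∀ (i : Fin (M+1)) (m' : ℕ) (c' : ℝ),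
      DifferentiableAt ℝ (fun q' => (c' * H q' ^ m') • gradx (φ i) q') q := by
    intro i m' c'
    rw [hgradx]
    fun_prop
  have hdivx : ∀ (i j : Fin (M+1)),
      (∑ k : Fin n, Dv (fun q' => (1:ℝ)/((r i : ℝ)+(r j : ℝ)+1) * H q' ^ (r i + r j + 1)
          * Dv (φ i) (ee k) q') (ee k) q)
        = divx (fun q' => ((1:ℝ)/((r i : ℝ)+(r j : ℝ)+1) * H q' ^ (r i + r j + 1))
            • gradx (φ i) q') q := by
    intro i j
    rw [divx_eq (hFdiff i _ _)]
    refine Finset.sum_congr rfl fun k _ => ?_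
    congr 1
    funext q'
    have hg : gradx (φ i) q' k = Dv (φ i) (ee k) q' := gradx_eq (hφd i q') k
    simp only [PiLp.smul_apply, smul_eq_mul, hg]
  have heq' : ∀ j : Fin (M+1),
      (∑ i, divx (fun q' => ((1:ℝ)/((r i : ℝ)+(r j : ℝ)+1) * H q' ^ (r i + r j + 1))
          • gradx (φ i) q') q)
        = -(H q ^ r j * ht) + ∑ i, ((r j : ℝ)*(r i : ℝ))/((r j : ℝ)+(r i : ℝ)-1)
            * H q ^ (r j + r i - 1) * φ i q := by
    intro j
    have h0 := heq q j
    rw [Finset.sum_sub_distrib] at h0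
    have hco : ∀ i : Fin (M+1),
        (fun q' => ((1:ℝ)/((r j : ℝ)+(r i : ℝ)+1) * H q' ^ (r j + r i + 1)) • gradx (φ i) q')
          = fun q' => ((1:ℝ)/((r i : ℝ)+(r j : ℝ)+1) * H q' ^ (r i + r j + 1)) • gradx (φ i) q' := by
      intro i; funext q'
      rw [Nat.add_comm (r j) (r i), add_comm (r j : ℝ) (r i : ℝ)]
    rw [Finset.sum_congr rfl (fun i _ => congrFun (congrArg divx (hco i)) q)] at h0
    rw [hht]
    linarith [h0]
  have hDsum : (∑ i, ∑ j, ∑ k, Dv (fun q' =>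
        (1:ℝ)/((r i : ℝ)+(r j : ℝ)+1) * H q' ^ (r i + r j + 1)
          * Dv (φ i) (ee k) q' * Dv (φ j) (ee l) q') (ee k) q)
      = -(ht * U) + SD + SC := by
    have hmul : ∀ (i j : Fin (M+1)) (k : Fin n),
        Dv (fun q' => (1:ℝ)/((r i : ℝ)+(r j : ℝ)+1) * H q' ^ (r i + r j + 1)
            * Dv (φ i) (ee k) q' * Dv (φ j) (ee l) q') (ee k) q
          = Dv (fun q' => (1:ℝ)/((r i : ℝ)+(r j : ℝ)+1) * H q' ^ (r i + r j + 1)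
              * Dv (φ i) (ee k) q') (ee k) q * Dv (φ j) (ee l) q
            + (1:ℝ)/((r i : ℝ)+(r j : ℝ)+1) * H q ^ (r i + r j + 1)
              * Dv (φ i) (ee k) q * Dv (Dv (φ j) (ee l)) (ee k) q := by
      intro i j k
      have h := Dv_mul (n := n)
        (f := fun q' => (1:ℝ)/((r i : ℝ)+(r j : ℝ)+1) * H q' ^ (r i + r j + 1)
          * Dv (φ i) (ee k) q') (g := Dv (φ j) (ee l)) (v := ee k) (q := q)
        (by fun_prop) (hA j (ee l) q)
      exact h
    calc (∑ i, ∑ j, ∑ k, Dv (fun q' =>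
          (1:ℝ)/((r i : ℝ)+(r j : ℝ)+1) * H q' ^ (r i + r j + 1)
            * Dv (φ i) (ee k) q' * Dv (φ j) (ee l) q') (ee k) q)
        = ∑ i, ∑ j, ((∑ k, Dv (fun q' => (1:ℝ)/((r i : ℝ)+(r j : ℝ)+1)
              * H q' ^ (r i + r j + 1) * Dv (φ i) (ee k) q') (ee k) q) * Dv (φ j) (ee l) q
            + (1:ℝ)/((r i : ℝ)+(r j : ℝ)+1) * H q ^ (r i + r j + 1)
              * ∑ k, Dv (φ i) (ee k) q * Dv (Dv (φ j) (ee l)) (ee k) q) := by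
          refine Finset.sum_congr rfl fun i _ => Finset.sum_congr rfl fun j _ => ?_
          rw [Finset.sum_congr rfl (fun k _ => hmul i j k), Finset.sum_add_distrib,
            ← Finset.sum_mul, Finset.mul_sum]
          congr 1
          exact Finset.sum_congr rfl fun k _ => by ring
      _ = (∑ i, ∑ j, (divx (fun q' => ((1:ℝ)/((r i : ℝ)+(r j : ℝ)+1)
              * H q' ^ (r i + r j + 1)) • gradx (φ i) q') q) * Dv (φ j) (ee l) q) + SC := by
          rw [Finset.sum_congr rfl (fun i (_ : i ∈ Finset.univ) => Finset.sum_add_distrib),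
            Finset.sum_add_distrib]
          congr 1
          exact Finset.sum_congr rfl fun i _ => Finset.sum_congr rfl fun j _ => by
            rw [hdivx i j]
      _ = (∑ j, ∑ i, (divx (fun q' => ((1:ℝ)/((r i : ℝ)+(r j : ℝ)+1)
              * H q' ^ (r i + r j + 1)) • gradx (φ i) q') q) * Dv (φ j) (ee l) q) + SC := by
          rw [Finset.sum_comm]
      _ = (∑ j, (-(H q ^ r j * ht) + ∑ i, ((r j : ℝ)*(r i : ℝ))/((r j : ℝ)+(r i : ℝ)-1)
              * H q ^ (r j + r i - 1) * φ i q) * Dv (φ j) (ee l) q) + SC := by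
          congr 1
          refine Finset.sum_congr rfl fun j _ => ?_
          rw [← Finset.sum_mul, heq' j]
      _ = -(ht * U) + SD + SC := by
          congr 1
          rw [Finset.sum_congr rfl (fun j (_ : j ∈ Finset.univ) =>
            add_mul (-(H q ^ r j * ht)) _ (Dv (φ j) (ee l) q)), Finset.sum_add_distrib]
          congr 1
          · rw [hU, Finset.mul_sum, ← Finset.sum_neg_distrib]
            refine Finset.sum_congr rfl fun j _ => by ring
          · rw [hSD]
            refine Finset.sum_congr rfl fun j _ => ?_
            rw [Finset.sum_mul]
  rw [hC, hC2, hB, hDsum]; ring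

set_option maxHeartbeats 3000000 in
/-- Local conservation of momentum `∂ₜ m^K + ∇·F_m^K = 0` for regular solutions of the Kakinuma
model over a flat bottom. -/
theorem stmt_19 (n N Ns : ℕ) (hn : 1 ≤ n) (p : Fin (Ns + 1) → ℕ)
    (hp0 : p 0 = 0) (hp : StrictMono p)
    (g ρ₁ ρ₂ h₁ h₂ : ℝ) (hg : 0 < g) (hρ₁ : 0 < ρ₁) (hρ₂ : 0 < ρ₂)
    (hh₁ : 0 < h₁) (hh₂ : 0 < h₂)
    (ζ : EuclideanSpace ℝ (Fin n) × ℝ → ℝ)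
    (φ₁ : Fin (N + 1) → EuclideanSpace ℝ (Fin n) × ℝ → ℝ)
    (φ₂ : Fin (Ns + 1) → EuclideanSpace ℝ (Fin n) × ℝ → ℝ)
    (hζ : ContDiff ℝ (⊤ : ℕ∞) ζ) (hφ₁ : ∀ i, ContDiff ℝ (⊤ : ℕ∞) (φ₁ i))
    (hφ₂ : ∀ i, ContDiff ℝ (⊤ : ℕ∞) (φ₂ i))
    -- layer thicknesses (flat bottom)
    (H₁ H₂ : EuclideanSpace ℝ (Fin n) × ℝ → ℝ)
    (hH₁ : ∀ q, H₁ q = h₁ - ζ q)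
    (hH₂ : ∀ q, H₂ q = h₂ + ζ q)
    -- approximate horizontal and vertical velocities at the interface
    (u₁ u₂ : EuclideanSpace ℝ (Fin n) × ℝ → EuclideanSpace ℝ (Fin n))
    (w₁ w₂ : EuclideanSpace ℝ (Fin n) × ℝ → ℝ)
    (hu₁ : ∀ q, u₁ q = ∑ j : Fin (N + 1), H₁ q ^ (2 * (j : ℕ)) • gradx (φ₁ j) q)
    (hw₁ : ∀ q, w₁ q = -∑ j : Fin (N + 1),
      (2 * (j : ℕ) : ℝ) * H₁ q ^ (2 * (j : ℕ) - 1) * φ₁ j q)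
    (hu₂ : ∀ q, u₂ q = ∑ j : Fin (Ns + 1), H₂ q ^ (p j) • gradx (φ₂ j) q)
    (hw₂ : ∀ q, w₂ q = ∑ j : Fin (Ns + 1), (p j : ℝ) * H₂ q ^ (p j - 1) * φ₂ j q)
    -- the Kakinuma model with flat bottom, first family of equations
    (heq1 : ∀ q, ∀ i : Fin (N + 1),
      H₁ q ^ (2 * (i : ℕ)) * pt ζ q
        - ∑ j : Fin (N + 1),
            (divx (fun q' =>
                ((1 : ℝ) / (2 * ((i : ℕ) + (j : ℕ)) + 1)
                  * H₁ q' ^ (2 * ((i : ℕ) + (j : ℕ)) + 1)) • gradx (φ₁ j) q') q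
              - (4 * (i : ℕ) * (j : ℕ) : ℝ) / ((2 * ((i : ℕ) + (j : ℕ)) : ℝ) - 1)
                * H₁ q ^ (2 * ((i : ℕ) + (j : ℕ)) - 1) * φ₁ j q) = 0)
    -- the Kakinuma model with flat bottom, second family of equations
    (heq2 : ∀ q, ∀ i : Fin (Ns + 1),
      H₂ q ^ (p i) * pt ζ q
        + ∑ j : Fin (Ns + 1),
            (divx (fun q' =>
                ((1 : ℝ) / ((p i : ℝ) + (p j : ℝ) + 1)
                  * H₂ q' ^ (p i + p j + 1)) • gradx (φ₂ j) q') q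
              - ((p i : ℝ) * (p j : ℝ)) / ((p i : ℝ) + (p j : ℝ) - 1)
                * H₂ q ^ (p i + p j - 1) * φ₂ j q) = 0)
    -- the Kakinuma model, Bernoulli-type equation
    (heq3 : ∀ q,
      ρ₁ * ((∑ j : Fin (N + 1), H₁ q ^ (2 * (j : ℕ)) * pt (φ₁ j) q)
          + g * ζ q + (1 / 2) * (‖u₁ q‖ ^ 2 + w₁ q ^ 2))
        - ρ₂ * ((∑ j : Fin (Ns + 1), H₂ q ^ (p j) * pt (φ₂ j) q)
          + g * ζ q + (1 / 2) * (‖u₂ q‖ ^ 2 + w₂ q ^ 2)) = 0)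
    -- the canonical variable φ
    (φc : EuclideanSpace ℝ (Fin n) × ℝ → ℝ)
    (hφc : ∀ q, φc q = ρ₂ * (∑ j : Fin (Ns + 1), H₂ q ^ (p j) * φ₂ j q)
      - ρ₁ * (∑ j : Fin (N + 1), H₁ q ^ (2 * (j : ℕ)) * φ₁ j q))
    -- energy density (flat bottom)
    (eK : EuclideanSpace ℝ (Fin n) × ℝ → ℝ)
    (heK : ∀ q, eK q =
      ρ₁ / 2 * ∑ i : Fin (N + 1), ∑ j : Fin (N + 1),
          ((1 : ℝ) / (2 * ((i : ℕ) + (j : ℕ)) + 1)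
              * H₁ q ^ (2 * ((i : ℕ) + (j : ℕ)) + 1)
              * ⟪gradx (φ₁ i) q, gradx (φ₁ j) q⟫
            + (4 * (i : ℕ) * (j : ℕ) : ℝ) / ((2 * ((i : ℕ) + (j : ℕ)) : ℝ) - 1)
              * H₁ q ^ (2 * ((i : ℕ) + (j : ℕ)) - 1) * φ₁ i q * φ₁ j q)
        + ρ₂ / 2 * ∑ i : Fin (Ns + 1), ∑ j : Fin (Ns + 1),
          ((1 : ℝ) / ((p i : ℝ) + (p j : ℝ) + 1) * H₂ q ^ (p i + p j + 1)
              * ⟪gradx (φ₂ i) q, gradx (φ₂ j) q⟫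
            + ((p i : ℝ) * (p j : ℝ)) / ((p i : ℝ) + (p j : ℝ) - 1)
              * H₂ q ^ (p i + p j - 1) * φ₂ i q * φ₂ j q)
        + (1 / 2) * (ρ₂ - ρ₁) * g * ζ q ^ 2)
    -- momentum density
    (mK : EuclideanSpace ℝ (Fin n) × ℝ → EuclideanSpace ℝ (Fin n))
    (hmK : ∀ q, mK q = ζ q • gradx φc q)
    -- momentum flux
    (FmK : EuclideanSpace ℝ (Fin n) × ℝ → Matrix (Fin n) (Fin n) ℝ)
    (hFmK : ∀ q, FmK q =
      (-(ζ q * pt φc q + eK q)) • (1 : Matrix (Fin n) (Fin n) ℝ)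
        + ρ₁ • ∑ i : Fin (N + 1), ∑ j : Fin (N + 1),
            ((1 : ℝ) / (2 * ((i : ℕ) + (j : ℕ)) + 1)
                * H₁ q ^ (2 * ((i : ℕ) + (j : ℕ)) + 1)) •
              Matrix.of (fun k l : Fin n => gradx (φ₁ i) q k * gradx (φ₁ j) q l)
        + ρ₂ • ∑ i : Fin (Ns + 1), ∑ j : Fin (Ns + 1),
            ((1 : ℝ) / ((p i : ℝ) + (p j : ℝ) + 1) * H₂ q ^ (p i + p j + 1)) •
              Matrix.of (fun k l : Fin n => gradx (φ₂ i) q k * gradx (φ₂ j) q l)) :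
    ∀ q : EuclideanSpace ℝ (Fin n) × ℝ, ∀ l : Fin n,
      pt (fun q' => mK q' l) q + divxMat FmK q l = 0 := by

  intro q l
  have hζd : Differentiable ℝ ζ := hζ.differentiable (by simp)
  have hH₁f : H₁ = fun q' => h₁ - ζ q' := funext hH₁
  have hH₂f : H₂ = fun q' => h₂ + ζ q' := funext hH₂
  have hH₁C : ContDiff ℝ (⊤ : ℕ∞) H₁ := by rw [hH₁f]; exact contDiff_const.sub hζ
  have hH₂C : ContDiff ℝ (⊤ : ℕ∞) H₂ := by rw [hH₂f]; exact contDiff_const.add hζ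
  have hH₁d : Differentiable ℝ H₁ := hH₁C.differentiable (by simp)
  have hH₂d : Differentiable ℝ H₂ := hH₂C.differentiable (by simp)
  have hφ₁d : ∀ i, Differentiable ℝ (φ₁ i) := fun i => (hφ₁ i).differentiable (by simp)
  have hφ₂d : ∀ i, Differentiable ℝ (φ₂ i) := fun i => (hφ₂ i).differentiable (by simp)
  have hA₁ : ∀ (i : Fin (N+1)) (v : Q n), Differentiable ℝ (Dv (φ₁ i) v) :=
    fun i v => ((hφ₁ i).dv).differentiable (by simp)
  have hA₂ : ∀ (i : Fin (Ns+1)) (v : Q n), Differentiable ℝ (Dv (φ₂ i) v) :=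
    fun i v => ((hφ₂ i).dv).differentiable (by simp)
  have hDH₁ : ∀ (v : Q n) (q' : Q n), Dv H₁ v q' = -Dv ζ v q' := by
    intro v q'; rw [hH₁f]; exact Dv_const_sub h₁
  have hDH₂ : ∀ (v : Q n) (q' : Q n), Dv H₂ v q' = Dv ζ v q' := by
    intro v q'; rw [hH₂f]; exact Dv_const_add h₂
  have hφcf : φc = fun q' => ρ₂ * (∑ j : Fin (Ns+1), H₂ q' ^ (p j) * φ₂ j q')
      - ρ₁ * (∑ j : Fin (N+1), H₁ q' ^ (2*(j:ℕ)) * φ₁ j q') := funext hφc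
  have hφcC : ContDiff ℝ (⊤ : ℕ∞) φc := by rw [hφcf]; fun_prop
  have hφcd : Differentiable ℝ φc := hφcC.differentiable (by simp)
  have hφcdv : ∀ v : Q n, Differentiable ℝ (Dv φc v) :=
    fun v => (hφcC.dv).differentiable (by simp)
  -- the canonical form of the energy density
  have heKf : eK = fun q' =>
      ρ₁ / 2 * ∑ i : Fin (N+1), ∑ j : Fin (N+1),
        ((1:ℝ)/(((2*(i:ℕ) :ℕ) : ℝ)+((2*(j:ℕ) :ℕ) : ℝ)+1) * H₁ q' ^ (2*(i:ℕ) + 2*(j:ℕ) + 1)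
            * ∑ k, Dv (φ₁ i) (ee k) q' * Dv (φ₁ j) (ee k) q'
          + (((2*(i:ℕ) :ℕ) : ℝ)*((2*(j:ℕ) :ℕ) : ℝ))/(((2*(i:ℕ) :ℕ) : ℝ)+((2*(j:ℕ) :ℕ) : ℝ)-1)
            * H₁ q' ^ (2*(i:ℕ) + 2*(j:ℕ) - 1) * φ₁ i q' * φ₁ j q')
      + ρ₂ / 2 * ∑ i : Fin (Ns+1), ∑ j : Fin (Ns+1),
        ((1:ℝ)/((p i : ℝ)+(p j : ℝ)+1) * H₂ q' ^ (p i + p j + 1)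
            * ∑ k, Dv (φ₂ i) (ee k) q' * Dv (φ₂ j) (ee k) q'
          + ((p i : ℝ)*(p j : ℝ))/((p i : ℝ)+(p j : ℝ)-1)
            * H₂ q' ^ (p i + p j - 1) * φ₂ i q' * φ₂ j q')
      + 1 / 2 * (ρ₂ - ρ₁) * g * ζ q' ^ 2 := by
    funext q'
    rw [heK q']
    congr 1
    congr 1
    · -- first layer sum
      congr 1
      refine Finset.sum_congr rfl fun i _ => Finset.sum_congr rfl fun j _ => ?_
      have hex : 2*((i:ℕ)+(j:ℕ)) + 1 = 2*(i:ℕ) + 2*(j:ℕ) + 1 := by ring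
      have hex2 : 2*((i:ℕ)+(j:ℕ)) - 1 = 2*(i:ℕ) + 2*(j:ℕ) - 1 := by omega
      have hinner : ⟪gradx (φ₁ i) q', gradx (φ₁ j) q'⟫
          = ∑ k, Dv (φ₁ i) (ee k) q' * Dv (φ₁ j) (ee k) q' := by
        rw [PiLp.inner_apply]
        exact Finset.sum_congr rfl fun k _ => by
          rw [gradx_eq (hφ₁d i q'), gradx_eq (hφ₁d j q')]; rw [RCLike.inner_apply', conj_trivial]
      rw [hinner, hex, hex2]
      push_cast
      ring
    · -- second layer sum
      congr 1
      refine Finset.sum_congr rfl fun i _ => Finset.sum_congr rfl fun j _ => ?_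
      have hinner : ⟪gradx (φ₂ i) q', gradx (φ₂ j) q'⟫
          = ∑ k, Dv (φ₂ i) (ee k) q' * Dv (φ₂ j) (ee k) q' := by
        rw [PiLp.inner_apply]
        exact Finset.sum_congr rfl fun k _ => by
          rw [gradx_eq (hφ₂d i q'), gradx_eq (hφ₂d j q')]; rw [RCLike.inner_apply', conj_trivial]
      rw [hinner]
  have heKC : ContDiff ℝ (⊤ : ℕ∞) eK := by
    rw [heKf]
    have h1C : ∀ (i : Fin (N+1)) (v : Q n), ContDiff ℝ (⊤ : ℕ∞) (Dv (φ₁ i) v) := fun i v => (hφ₁ i).dv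
    have h2C : ∀ (i : Fin (Ns+1)) (v : Q n), ContDiff ℝ (⊤ : ℕ∞) (Dv (φ₂ i) v) := fun i v => (hφ₂ i).dv
    fun_prop
  have heKd : Differentiable ℝ eK := heKC.differentiable (by simp)
  -- Step 1 : the time-derivative part
  have hmKl : (fun q' => mK q' l) = fun q' => ζ q' * Dv φc (ee l) q' := by
    funext q'
    rw [hmK q']
    show (ζ q' • gradx φc q') l = _
    rw [PiLp.smul_apply, gradx_eq (hφcd q'), smul_eq_mul]
  have h1 : pt (fun q' => mK q' l) q
      = Dv ζ et q * Dv φc (ee l) q + ζ q * Dv (Dv φc et) (ee l) q := by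
    rw [hmKl, pt_eq (by fun_prop), Dv_mul (hζd q) (hφcdv (ee l) q),
      Dv_swap hφcC (ee l) et q]
  -- Step 2 : the flux part
  have hFmKf : ∀ k' l' : Fin n, (fun q' => FmK q' k' l')
      = fun q' => (if k' = l' then -(ζ q' * Dv φc et q' + eK q') else 0)
        + ρ₁ * ∑ i : Fin (N+1), ∑ j : Fin (N+1),
            ((1:ℝ)/(((2*(i:ℕ) :ℕ) : ℝ)+((2*(j:ℕ) :ℕ) : ℝ)+1) * H₁ q' ^ (2*(i:ℕ) + 2*(j:ℕ) + 1)
              * Dv (φ₁ i) (ee k') q' * Dv (φ₁ j) (ee l') q')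
        + ρ₂ * ∑ i : Fin (Ns+1), ∑ j : Fin (Ns+1),
            ((1:ℝ)/((p i : ℝ)+(p j : ℝ)+1) * H₂ q' ^ (p i + p j + 1)
              * Dv (φ₂ i) (ee k') q' * Dv (φ₂ j) (ee l') q') := by
    intro k' l'
    funext q'
    rw [hFmK q']
    simp only [Matrix.add_apply, Matrix.smul_apply, Matrix.sum_apply, Matrix.one_apply,
      Matrix.of_apply, smul_eq_mul, mul_ite, mul_one, mul_zero]
    congr 1
    congr 1
    · by_cases hk : k' = l'
      · simp only [if_pos hk, pt_eq (hφcd q')]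
      · simp only [if_neg hk]
    · congr 1
      refine Finset.sum_congr rfl fun i _ => Finset.sum_congr rfl fun j _ => ?_
      have hex : 2*((i:ℕ)+(j:ℕ)) + 1 = 2*(i:ℕ) + 2*(j:ℕ) + 1 := by ring
      rw [gradx_eq (hφ₁d i q'), gradx_eq (hφ₁d j q'), hex]
      push_cast
      ring
    · congr 1
      refine Finset.sum_congr rfl fun i _ => Finset.sum_congr rfl fun j _ => ?_
      rw [gradx_eq (hφ₂d i q'), gradx_eq (hφ₂d j q')]
      ring
  have hdiagd : ∀ k : Fin n,
      DifferentiableAt ℝ (fun q' => if k = l then -(ζ q' * Dv φc et q' + eK q') else 0) q := by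
    intro k
    by_cases hk : k = l
    · simp only [if_pos hk]
      have := hφcdv et
      fun_prop
    · simp only [if_neg hk]
      fun_prop
  have hFmKd : ∀ k' l' : Fin n, DifferentiableAt ℝ (fun q' => FmK q' k' l') q := by
    intro k' l'
    rw [hFmKf k' l']
    by_cases hk : k' = l'
    · simp only [if_pos hk]
      have := hφcdv et
      fun_prop
    · simp only [if_neg hk]
      fun_prop
  have hdm : divxMat FmK q l = ∑ k, Dv (fun q' => FmK q' k l) (ee k) q :=
    divxMat_eq hFmKd
  have hsplit : ∀ k : Fin n, Dv (fun q' => FmK q' k l) (ee k) q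
      = Dv (fun q' => if k = l then -(ζ q' * Dv φc et q' + eK q') else 0) (ee k) q
        + ρ₁ * Dv (fun q' => ∑ i : Fin (N+1), ∑ j : Fin (N+1),
            ((1:ℝ)/(((2*(i:ℕ) :ℕ) : ℝ)+((2*(j:ℕ) :ℕ) : ℝ)+1) * H₁ q' ^ (2*(i:ℕ) + 2*(j:ℕ) + 1)
              * Dv (φ₁ i) (ee k) q' * Dv (φ₁ j) (ee l) q')) (ee k) q
        + ρ₂ * Dv (fun q' => ∑ i : Fin (Ns+1), ∑ j : Fin (Ns+1),
            ((1:ℝ)/((p i : ℝ)+(p j : ℝ)+1) * H₂ q' ^ (p i + p j + 1)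
              * Dv (φ₂ i) (ee k) q' * Dv (φ₂ j) (ee l) q')) (ee k) q := by
    intro k
    rw [hFmKf k l]
    rw [Dv_add (by exact (hdiagd k).add (by fun_prop)) (by fun_prop),
      Dv_add (hdiagd k) (by fun_prop),
      Dv_const_mul _ (by fun_prop), Dv_const_mul _ (by fun_prop)]
  have hdiag : (∑ k : Fin n,
        Dv (fun q' => if k = l then -(ζ q' * Dv φc et q' + eK q') else 0) (ee k) q)
      = -(Dv ζ (ee l) q * Dv φc et q + ζ q * Dv (Dv φc et) (ee l) q + Dv eK (ee l) q) := by
    rw [Finset.sum_eq_single l]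
    · have hfl : (fun q' => if l = l then -(ζ q' * Dv φc et q' + eK q') else 0)
          = fun q' => -(ζ q' * Dv φc et q' + eK q') := by
        funext q'; rw [if_pos rfl]
      rw [hfl, Dv_neg, Dv_add (by exact (hζd q).mul (hφcdv et q)) (heKd q),
        Dv_mul (hζd q) (hφcdv et q)]
    · intro k _ hkl
      simp only [if_neg hkl]
      exact Dv_const 0
    · intro h; exact absurd (Finset.mem_univ l) h
  have hT₁ : (∑ k : Fin n, Dv (fun q' => ∑ i : Fin (N+1), ∑ j : Fin (N+1),
        ((1:ℝ)/(((2*(i:ℕ) :ℕ) : ℝ)+((2*(j:ℕ) :ℕ) : ℝ)+1) * H₁ q' ^ (2*(i:ℕ) + 2*(j:ℕ) + 1)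
          * Dv (φ₁ i) (ee k) q' * Dv (φ₁ j) (ee l) q')) (ee k) q)
      = ∑ i : Fin (N+1), ∑ j : Fin (N+1), ∑ k : Fin n, Dv (fun q' =>
        (1:ℝ)/(((2*(i:ℕ) :ℕ) : ℝ)+((2*(j:ℕ) :ℕ) : ℝ)+1) * H₁ q' ^ (2*(i:ℕ) + 2*(j:ℕ) + 1)
          * Dv (φ₁ i) (ee k) q' * Dv (φ₁ j) (ee l) q') (ee k) q := by
    have e : ∀ k : Fin n, Dv (fun q' => ∑ i : Fin (N+1), ∑ j : Fin (N+1),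
        ((1:ℝ)/(((2*(i:ℕ) :ℕ) : ℝ)+((2*(j:ℕ) :ℕ) : ℝ)+1) * H₁ q' ^ (2*(i:ℕ) + 2*(j:ℕ) + 1)
          * Dv (φ₁ i) (ee k) q' * Dv (φ₁ j) (ee l) q')) (ee k) q
        = ∑ i : Fin (N+1), ∑ j : Fin (N+1), Dv (fun q' =>
          (1:ℝ)/(((2*(i:ℕ) :ℕ) : ℝ)+((2*(j:ℕ) :ℕ) : ℝ)+1) * H₁ q' ^ (2*(i:ℕ) + 2*(j:ℕ) + 1)
            * Dv (φ₁ i) (ee k) q' * Dv (φ₁ j) (ee l) q') (ee k) q := by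
      intro k
      rw [Dv_sum _ _ (fun i _ => by fun_prop)]
      exact Finset.sum_congr rfl fun i _ => by rw [Dv_sum _ _ (fun j _ => by fun_prop)]
    rw [Finset.sum_congr rfl (fun k _ => e k), Finset.sum_comm]
    exact Finset.sum_congr rfl fun i _ => Finset.sum_comm
  have hT₂ : (∑ k : Fin n, Dv (fun q' => ∑ i : Fin (Ns+1), ∑ j : Fin (Ns+1),
        ((1:ℝ)/((p i : ℝ)+(p j : ℝ)+1) * H₂ q' ^ (p i + p j + 1)
          * Dv (φ₂ i) (ee k) q' * Dv (φ₂ j) (ee l) q')) (ee k) q)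
      = ∑ i : Fin (Ns+1), ∑ j : Fin (Ns+1), ∑ k : Fin n, Dv (fun q' =>
        (1:ℝ)/((p i : ℝ)+(p j : ℝ)+1) * H₂ q' ^ (p i + p j + 1)
          * Dv (φ₂ i) (ee k) q' * Dv (φ₂ j) (ee l) q') (ee k) q := by
    have e : ∀ k : Fin n, Dv (fun q' => ∑ i : Fin (Ns+1), ∑ j : Fin (Ns+1),
        ((1:ℝ)/((p i : ℝ)+(p j : ℝ)+1) * H₂ q' ^ (p i + p j + 1)
          * Dv (φ₂ i) (ee k) q' * Dv (φ₂ j) (ee l) q')) (ee k) q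
        = ∑ i : Fin (Ns+1), ∑ j : Fin (Ns+1), Dv (fun q' =>
          (1:ℝ)/((p i : ℝ)+(p j : ℝ)+1) * H₂ q' ^ (p i + p j + 1)
            * Dv (φ₂ i) (ee k) q' * Dv (φ₂ j) (ee l) q') (ee k) q := by
      intro k
      rw [Dv_sum _ _ (fun i _ => by fun_prop)]
      exact Finset.sum_congr rfl fun i _ => by rw [Dv_sum _ _ (fun j _ => by fun_prop)]
    rw [Finset.sum_congr rfl (fun k _ => e k), Finset.sum_comm]
    exact Finset.sum_congr rfl fun i _ => Finset.sum_comm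
  have hdm' : divxMat FmK q l
      = -(Dv ζ (ee l) q * Dv φc et q + ζ q * Dv (Dv φc et) (ee l) q + Dv eK (ee l) q)
        + ρ₁ * (∑ i : Fin (N+1), ∑ j : Fin (N+1), ∑ k : Fin n, Dv (fun q' =>
            (1:ℝ)/(((2*(i:ℕ) :ℕ) : ℝ)+((2*(j:ℕ) :ℕ) : ℝ)+1) * H₁ q' ^ (2*(i:ℕ) + 2*(j:ℕ) + 1)
              * Dv (φ₁ i) (ee k) q' * Dv (φ₁ j) (ee l) q') (ee k) q)
        + ρ₂ * (∑ i : Fin (Ns+1), ∑ j : Fin (Ns+1), ∑ k : Fin n, Dv (fun q' =>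
            (1:ℝ)/((p i : ℝ)+(p j : ℝ)+1) * H₂ q' ^ (p i + p j + 1)
              * Dv (φ₂ i) (ee k) q' * Dv (φ₂ j) (ee l) q') (ee k) q) := by
    rw [hdm, Finset.sum_congr rfl (fun k _ => hsplit k), Finset.sum_add_distrib,
      Finset.sum_add_distrib, hdiag, ← Finset.mul_sum, ← Finset.mul_sum, hT₁, hT₂]
  -- Step 3 : the Kakinuma equations in layer form
  have h1eq : ∀ (q' : Q n) (i : Fin (N+1)),
      H₁ q' ^ (2*(i:ℕ)) * Dv H₁ et q'
        + ∑ j : Fin (N+1), (divx (fun q'' =>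
              ((1:ℝ)/(((2*(i:ℕ) :ℕ) : ℝ)+((2*(j:ℕ) :ℕ) : ℝ)+1)
                * H₁ q'' ^ (2*(i:ℕ) + 2*(j:ℕ) + 1)) • gradx (φ₁ j) q'') q'
            - (((2*(i:ℕ) :ℕ) : ℝ)*((2*(j:ℕ) :ℕ) : ℝ))/(((2*(i:ℕ) :ℕ) : ℝ)+((2*(j:ℕ) :ℕ) : ℝ)-1)
              * H₁ q' ^ (2*(i:ℕ) + 2*(j:ℕ) - 1) * φ₁ j q') = 0 := by
    intro q' i
    have h0 := heq1 q' i
    rw [pt_eq (hζd q')] at h0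
    have hsum : (∑ j : Fin (N+1), (divx (fun q'' =>
          ((1:ℝ)/(((2*(i:ℕ) :ℕ) : ℝ)+((2*(j:ℕ) :ℕ) : ℝ)+1)
            * H₁ q'' ^ (2*(i:ℕ) + 2*(j:ℕ) + 1)) • gradx (φ₁ j) q'') q'
          - (((2*(i:ℕ) :ℕ) : ℝ)*((2*(j:ℕ) :ℕ) : ℝ))/(((2*(i:ℕ) :ℕ) : ℝ)+((2*(j:ℕ) :ℕ) : ℝ)-1)
            * H₁ q' ^ (2*(i:ℕ) + 2*(j:ℕ) - 1) * φ₁ j q'))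
        = ∑ j : Fin (N+1), (divx (fun q'' =>
            ((1 : ℝ) / (2 * ((i : ℕ) + (j : ℕ)) + 1)
              * H₁ q'' ^ (2 * ((i : ℕ) + (j : ℕ)) + 1)) • gradx (φ₁ j) q'') q'
          - (4 * (i : ℕ) * (j : ℕ) : ℝ) / ((2 * ((i : ℕ) + (j : ℕ)) : ℝ) - 1)
            * H₁ q' ^ (2 * ((i : ℕ) + (j : ℕ)) - 1) * φ₁ j q') := by
      refine Finset.sum_congr rfl fun j _ => ?_
      congr 1
      · have hfe : (fun q'' => ((1:ℝ)/(((2*(i:ℕ) :ℕ) : ℝ)+((2*(j:ℕ) :ℕ) : ℝ)+1)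
              * H₁ q'' ^ (2*(i:ℕ) + 2*(j:ℕ) + 1)) • gradx (φ₁ j) q'')
            = fun q'' => ((1 : ℝ) / (2 * ((i : ℕ) + (j : ℕ)) + 1)
              * H₁ q'' ^ (2 * ((i : ℕ) + (j : ℕ)) + 1)) • gradx (φ₁ j) q'' := by
          funext q''
          rw [show 2 * ((i:ℕ) + (j:ℕ)) + 1 = 2*(i:ℕ) + 2*(j:ℕ) + 1 from by ring]
          congr 2
          push_cast
          ring
        rw [hfe]
      · rw [show 2 * ((i:ℕ) + (j:ℕ)) - 1 = 2*(i:ℕ) + 2*(j:ℕ) - 1 from by omega]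
        push_cast
        ring
    rw [hDH₁ et q', hsum]
    linarith [h0]
  have h2eq : ∀ (q' : Q n) (i : Fin (Ns+1)),
      H₂ q' ^ p i * Dv H₂ et q'
        + ∑ j : Fin (Ns+1), (divx (fun q'' =>
              ((1:ℝ)/((p i : ℝ)+(p j : ℝ)+1) * H₂ q'' ^ (p i + p j + 1)) • gradx (φ₂ j) q'') q'
            - ((p i : ℝ)*(p j : ℝ))/((p i : ℝ)+(p j : ℝ)-1)
              * H₂ q' ^ (p i + p j - 1) * φ₂ j q') = 0 := by
    intro q' i
    have h0 := heq2 q' i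
    rw [pt_eq (hζd q')] at h0
    rw [hDH₂ et q']
    exact h0
  have L₁ := layer (fun i : Fin (N+1) => 2*(i:ℕ)) H₁ φ₁ hH₁C hφ₁ h1eq q l
  have L₂ := layer p H₂ φ₂ hH₂C hφ₂ h2eq q l
  beta_reduce at L₁
  rw [hDH₁ et q, hDH₁ (ee l) q] at L₁
  rw [hDH₂ et q, hDH₂ (ee l) q] at L₂
  -- Step 4 : expand the derivatives of φc
  have hDφc : ∀ v : Q n, Dv φc v q
      = ρ₂ * (Dv ζ v q * (∑ j : Fin (Ns+1), (p j : ℝ) * H₂ q ^ (p j - 1) * φ₂ j q)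
          + ∑ j : Fin (Ns+1), H₂ q ^ (p j) * Dv (φ₂ j) v q)
        - ρ₁ * (-(Dv ζ v q * (∑ j : Fin (N+1), ((2*(j:ℕ) :ℕ) : ℝ) * H₁ q ^ (2*(j:ℕ) - 1) * φ₁ j q))
          + ∑ j : Fin (N+1), H₁ q ^ (2*(j:ℕ)) * Dv (φ₁ j) v q) := by
    intro v
    rw [hφcf]
    rw [Dv_sub (by fun_prop) (by fun_prop), Dv_const_mul _ (by fun_prop),
      Dv_const_mul _ (by fun_prop), Dv_sum _ _ (fun j _ => by fun_prop),
      Dv_sum _ _ (fun j _ => by fun_prop)]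
    have e2 : ∀ j : Fin (Ns+1), Dv (fun q' => H₂ q' ^ p j * φ₂ j q') v q
        = (p j : ℝ) * H₂ q ^ (p j - 1) * Dv ζ v q * φ₂ j q + H₂ q ^ p j * Dv (φ₂ j) v q := by
      intro j
      rw [Dv_mul (by fun_prop) (hφ₂d j q), Dv_pow _ (hH₂d q), hDH₂]
    have e1 : ∀ j : Fin (N+1), Dv (fun q' => H₁ q' ^ (2*(j:ℕ)) * φ₁ j q') v q
        = -(((2*(j:ℕ) :ℕ) : ℝ) * H₁ q ^ (2*(j:ℕ) - 1) * Dv ζ v q) * φ₁ j q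
          + H₁ q ^ (2*(j:ℕ)) * Dv (φ₁ j) v q := by
      intro j
      rw [Dv_mul (by fun_prop) (hφ₁d j q), Dv_pow _ (hH₁d q), hDH₁]
      ring
    rw [Finset.sum_congr rfl (fun j _ => e2 j), Finset.sum_congr rfl (fun j _ => e1 j),
      Finset.sum_add_distrib, Finset.sum_add_distrib]
    have s2 : (∑ j : Fin (Ns+1), (p j : ℝ) * H₂ q ^ (p j - 1) * Dv ζ v q * φ₂ j q)
        = Dv ζ v q * ∑ j : Fin (Ns+1), (p j : ℝ) * H₂ q ^ (p j - 1) * φ₂ j q := by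
      rw [Finset.mul_sum]
      exact Finset.sum_congr rfl fun j _ => by ring
    have s1 : (∑ j : Fin (N+1), -(((2*(j:ℕ) :ℕ) : ℝ) * H₁ q ^ (2*(j:ℕ) - 1) * Dv ζ v q) * φ₁ j q)
        = -(Dv ζ v q * ∑ j : Fin (N+1), ((2*(j:ℕ) :ℕ) : ℝ) * H₁ q ^ (2*(j:ℕ) - 1) * φ₁ j q) := by
      rw [Finset.mul_sum, ← Finset.sum_neg_distrib]
      exact Finset.sum_congr rfl fun j _ => by ring
    rw [s2, s1]
  -- Step 5 : expand the derivative of the energy density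
  have hA₁C : ∀ (i : Fin (N+1)) (v : Q n), ContDiff ℝ (⊤ : ℕ∞) (Dv (φ₁ i) v) := fun i v => (hφ₁ i).dv
  have hA₂C : ∀ (i : Fin (Ns+1)) (v : Q n), ContDiff ℝ (⊤ : ℕ∞) (Dv (φ₂ i) v) := fun i v => (hφ₂ i).dv
  have heKder : Dv eK (ee l) q
      = ρ₁ / 2 * Dv (fun q' => ∑ i : Fin (N+1), ∑ j : Fin (N+1),
          ((1:ℝ)/(((2*(i:ℕ) :ℕ) : ℝ)+((2*(j:ℕ) :ℕ) : ℝ)+1) * H₁ q' ^ (2*(i:ℕ) + 2*(j:ℕ) + 1)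
              * ∑ k, Dv (φ₁ i) (ee k) q' * Dv (φ₁ j) (ee k) q'
            + (((2*(i:ℕ) :ℕ) : ℝ)*((2*(j:ℕ) :ℕ) : ℝ))/(((2*(i:ℕ) :ℕ) : ℝ)+((2*(j:ℕ) :ℕ) : ℝ)-1)
              * H₁ q' ^ (2*(i:ℕ) + 2*(j:ℕ) - 1) * φ₁ i q' * φ₁ j q')) (ee l) q
        + ρ₂ / 2 * Dv (fun q' => ∑ i : Fin (Ns+1), ∑ j : Fin (Ns+1),
          ((1:ℝ)/((p i : ℝ)+(p j : ℝ)+1) * H₂ q' ^ (p i + p j + 1)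
              * ∑ k, Dv (φ₂ i) (ee k) q' * Dv (φ₂ j) (ee k) q'
            + ((p i : ℝ)*(p j : ℝ))/((p i : ℝ)+(p j : ℝ)-1)
              * H₂ q' ^ (p i + p j - 1) * φ₂ i q' * φ₂ j q')) (ee l) q
        + (ρ₂ - ρ₁) * g * (ζ q * Dv ζ (ee l) q) := by
    rw [heKf]
    rw [Dv_add (by fun_prop) (by fun_prop), Dv_add (by fun_prop) (by fun_prop),
      Dv_const_mul _ (by fun_prop), Dv_const_mul _ (by fun_prop),
      Dv_const_mul _ (by fun_prop), Dv_pow _ (hζd q)]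
    push_cast
    ring
  -- Step 6 : the Bernoulli equation in atomic form
  have hnorm : ∀ x : EuclideanSpace ℝ (Fin n), ‖x‖^2 = ∑ k, (x k)^2 := by
    intro x
    rw [← real_inner_self_eq_norm_sq, PiLp.inner_apply]
    exact Finset.sum_congr rfl fun k _ => (pow_two (x k)).symm
  have hu₁k : ∀ k : Fin n, u₁ q k
      = ∑ i : Fin (N+1), H₁ q ^ (2*(i:ℕ)) * Dv (φ₁ i) (ee k) q := by
    intro k
    rw [hu₁ q, WithLp.ofLp_sum, Finset.sum_apply]
    exact Finset.sum_congr rfl fun i _ => by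
      rw [PiLp.smul_apply, gradx_eq (hφ₁d i q), smul_eq_mul]
  have hu₂k : ∀ k : Fin n, u₂ q k
      = ∑ i : Fin (Ns+1), H₂ q ^ (p i) * Dv (φ₂ i) (ee k) q := by
    intro k
    rw [hu₂ q, WithLp.ofLp_sum, Finset.sum_apply]
    exact Finset.sum_congr rfl fun i _ => by
      rw [PiLp.smul_apply, gradx_eq (hφ₂d i q), smul_eq_mul]
  have hP₁ : ‖u₁ q‖^2
      = ∑ k, (∑ i : Fin (N+1), H₁ q ^ (2*(i:ℕ)) * Dv (φ₁ i) (ee k) q)^2 := by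
    rw [hnorm]
    exact Finset.sum_congr rfl fun k _ => by rw [hu₁k k]
  have hP₂ : ‖u₂ q‖^2
      = ∑ k, (∑ i : Fin (Ns+1), H₂ q ^ (p i) * Dv (φ₂ i) (ee k) q)^2 := by
    rw [hnorm]
    exact Finset.sum_congr rfl fun k _ => by rw [hu₂k k]
  have hw₁' : w₁ q = -(∑ j : Fin (N+1), ((2*(j:ℕ) :ℕ) : ℝ) * H₁ q ^ (2*(j:ℕ) - 1) * φ₁ j q) := by
    rw [hw₁ q]
    congr 1
    exact Finset.sum_congr rfl fun j _ => by push_cast; ring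
  have hw₂' : w₂ q = ∑ j : Fin (Ns+1), (p j : ℝ) * H₂ q ^ (p j - 1) * φ₂ j q := hw₂ q
  have hpt₁ : (∑ j : Fin (N+1), H₁ q ^ (2*(j:ℕ)) * pt (φ₁ j) q)
      = ∑ j : Fin (N+1), H₁ q ^ (2*(j:ℕ)) * Dv (φ₁ j) et q :=
    Finset.sum_congr rfl fun j _ => by rw [pt_eq (hφ₁d j q)]
  have hpt₂ : (∑ j : Fin (Ns+1), H₂ q ^ (p j) * pt (φ₂ j) q)
      = ∑ j : Fin (Ns+1), H₂ q ^ (p j) * Dv (φ₂ j) et q :=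
    Finset.sum_congr rfl fun j _ => by rw [pt_eq (hφ₂d j q)]
  have heq3' := heq3 q
  rw [hpt₁, hpt₂, hP₁, hP₂, hw₁', hw₂'] at heq3'
  -- Step 7 : conclusion
  rw [h1, hdm', hDφc et, hDφc (ee l), heKder]
  linear_combination ρ₁ * L₁ + ρ₂ * L₂ + Dv ζ (ee l) q * heq3'
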